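/- arXiv:2104.00827 — 3 statements merged into one kernel-verified Lean document; each statement's English description precedes it below -/
import Mathlib

section
/- With p = 1 + τ√(g/ℓ) and q = 1 + τ√(g/(ℓ−ℓ₀)) for small ℓ₀ ∈ (0, ℓ), the robustness lower bound satisfies |(pq − 1)/(p − q)| ≥ C/ℓ₀ for some constant C > 0 depending only on τ, g, ℓ, for all ℓ₀ in (0, ℓ/2). -/
/-! With `a = √(g/ℓ)` and `b = √(g/(ℓ-ℓ₀))` we have `p = 1 + τa`, `q = 1 + τb` and
`|(pq - 1)/(p - q)| = (a + b + τab)/(b - a) ≥ a/(b - a)`. Rationalising the gap of square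
roots, `a/(b - a) = a(a + b)/(b² - a²) ≥ 2a²/(b² - a²) = 2(ℓ - ℓ₀)/ℓ₀`, which exceeds `ℓ/ℓ₀`
once `ℓ₀ < ℓ/2`. So `C = ℓ` works. -/

lemma div_sub_le_abs_mul_sub_one_div_sub {τ a b : ℝ} (hτ : 0 < τ) (ha : 0 ≤ a) (hab : a < b) :
    a / (b - a) ≤ |((1 + τ * a) * (1 + τ * b) - 1) / ((1 + τ * a) - (1 + τ * b))| := by
  have hb : 0 < b := ha.trans_lt hab
  have hden : (1 + τ * a) - (1 + τ * b) ≠ 0 := by nlinarith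
  have hratio : ((1 + τ * a) * (1 + τ * b) - 1) / ((1 + τ * a) - (1 + τ * b)) =
      -((a + b + τ * a * b) / (b - a)) := by
    rw [div_eq_iff hden, neg_mul, div_mul_eq_mul_div, eq_comm, neg_eq_iff_eq_neg,
      div_eq_iff (sub_pos.mpr hab).ne']
    ring
  rw [hratio, abs_neg, abs_of_nonneg (by positivity)]
  gcongr
  nlinarith [mul_nonneg (mul_nonneg hτ.le ha) (ha.trans hab.le)]

lemma Real.two_mul_div_sub_le_sqrt_div_sqrt_sub {x y : ℝ} (hx : 0 ≤ x) (hxy : x < y) :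
    2 * x / (y - x) ≤ √x / (√y - √x) := by
  have hsqrt : √x < √y := Real.sqrt_lt_sqrt hx hxy
  have hgap : (√y - √x) * (√y + √x) = y - x := by
    rw [show (√y - √x) * (√y + √x) = √y ^ 2 - √x ^ 2 by ring, sq_sqrt hx,
      sq_sqrt (hx.trans hxy.le)]
  rw [div_le_div_iff₀ (by linarith) (by linarith), ← hgap]
  have hnum : 2 * x ≤ √x * (√y + √x) := by
    nlinarith [sq_sqrt hx, sqrt_nonneg x]
  nlinarith [sub_pos.mpr hsqrt]

/-- With `p = 1 + τ√(g/ℓ)` and `q = 1 + τ√(g/(ℓ - ℓ₀))`, the robustness lower bound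
`|(pq - 1)/(p - q)|` is at least `C/ℓ₀` for some constant `C > 0` depending only on
`τ, g, ℓ`, uniformly over fixation points `ℓ₀ ∈ (0, ℓ/2)`. -/
theorem cartpole_robustness_bound (τ g ℓ : ℝ) (hτ : 0 < τ) (hg : 0 < g) (hℓ : 0 < ℓ) :
    ∃ C > (0 : ℝ), ∀ ℓ₀ ∈ Set.Ioo (0 : ℝ) (ℓ / 2),
      |((1 + τ * Real.sqrt (g / ℓ)) * (1 + τ * Real.sqrt (g / (ℓ - ℓ₀))) - 1) /
        ((1 + τ * Real.sqrt (g / ℓ)) - (1 + τ * Real.sqrt (g / (ℓ - ℓ₀))))| ≥ C / ℓ₀ := by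
  refine ⟨ℓ, hℓ, fun ℓ₀ ⟨hℓ₀, hℓ₀ℓ⟩ => ?_⟩
  have hshort : 0 < ℓ - ℓ₀ := by linarith
  have hlt : g / ℓ < g / (ℓ - ℓ₀) := div_lt_div_of_pos_left hg hshort (by linarith)
  have hrel : 2 * (g / ℓ) / (g / (ℓ - ℓ₀) - g / ℓ) = 2 * (ℓ - ℓ₀) / ℓ₀ := by
    have hdiff : g / (ℓ - ℓ₀) - g / ℓ = g * ℓ₀ / ((ℓ - ℓ₀) * ℓ) := by
      field_simp
      ring
    rw [hdiff]
    field_simp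
  calc ℓ / ℓ₀ ≤ 2 * (ℓ - ℓ₀) / ℓ₀ := by gcongr; linarith
    _ = 2 * (g / ℓ) / (g / (ℓ - ℓ₀) - g / ℓ) := hrel.symm
    _ ≤ √(g / ℓ) / (√(g / (ℓ - ℓ₀)) - √(g / ℓ)) :=
      Real.two_mul_div_sub_le_sqrt_div_sqrt_sub (by positivity) hlt
    _ ≤ _ := div_sub_le_abs_mul_sub_one_div_sub hτ (Real.sqrt_nonneg _)
      (Real.sqrt_lt_sqrt (by positivity) hlt)
end

section
/- Suppose T is holomorphic on {|ζ| > 1}, continuous and bounded on {|ζ| ≥ 1}, and T(p) = 1 for some p with |p| > 1, and T(q) = 0 for some q with |q| > 1, with p, q real and p ≠ q. Then sup_{|ζ|=1} |T(ζ)| ≥ |(pq − 1)/(p − q)|. -/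
/-!
Under `ζ ↦ ζ⁻¹` the exterior of the unit disc becomes the punctured disc, and since `T` is bounded,
Riemann's removable singularity theorem extends `z ↦ T z⁻¹` to a function `g` holomorphic on the
disc and continuous up to the circle, with `g q⁻¹ = 0` and `g p⁻¹ = 1`. Dividing `g` by the
Blaschke factor vanishing at `q⁻¹` keeps it holomorphic and does not change its modulus on the
circle, so by the maximum modulus principle its value `(pq - 1)/(q - p)` at `p⁻¹` is bounded by
the supremum of `|T|` on the circle.
-/

open Metric Set Filter Topology ComplexConjugate Complex

variable {E : Type*} [NormedAddCommGroup E] [NormedSpace ℂ E] [CompleteSpace E]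

theorem exists_diffContOnCl_ball_eq_comp_inv {T : ℂ → E}
    (hd : DifferentiableOn ℂ T {ζ | 1 < ‖ζ‖}) (hc : ContinuousOn T {ζ | 1 ≤ ‖ζ‖})
    (hb : BddAbove ((‖T ·‖) '' {ζ | 1 < ‖ζ‖})) :
    ∃ g : ℂ → E, DiffContOnCl ℂ g (ball 0 1) ∧ ∀ z ≠ 0, g z = T z⁻¹ := by
  set f : ℂ → E := fun z => T z⁻¹
  have hmaps : MapsTo Inv.inv (ball (0 : ℂ) 1 \ {0}) {ζ | 1 < ‖ζ‖} := fun z ⟨hz1, hz0⟩ => by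
    rw [mem_ball_zero_iff] at hz1
    rw [mem_ofPred_eq, norm_inv]
    exact (one_lt_inv₀ (norm_pos_iff.2 hz0)).2 hz1
  have hmaps' : MapsTo Inv.inv (closedBall (0 : ℂ) 1 \ {0}) {ζ | 1 ≤ ‖ζ‖} := fun z ⟨hz1, hz0⟩ => by
    rw [mem_closedBall_zero_iff] at hz1
    rw [mem_ofPred_eq, norm_inv]
    exact (one_le_inv₀ (norm_pos_iff.2 hz0)).2 hz1
  refine ⟨Function.update f 0 (limUnder (𝓝[≠] 0) f), ?_, fun z hz => Function.update_of_ne hz _ _⟩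
  have hgd : DifferentiableOn ℂ (Function.update f 0 (limUnder (𝓝[≠] 0) f)) (ball 0 1) :=
    differentiableOn_update_limUnder_of_bddAbove (ball_mem_nhds 0 one_pos)
      (hd.comp (differentiableOn_inv.mono fun z hz => hz.2) hmaps)
      (hb.mono <| by rintro _ ⟨z, hz, rfl⟩; exact ⟨z⁻¹, hmaps hz, rfl⟩)
  refine .mk_ball hgd fun z hz => ?_
  rcases eq_or_ne z 0 with rfl | hz0
  · exact (hgd.continuousOn.continuousAt (ball_mem_nhds 0 one_pos)).continuousWithinAt
  rw [← continuousWithinAt_sdiff_singleton (y := 0)]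
  exact ((hc.comp (continuousOn_inv₀.mono fun w hw => hw.2) hmaps').congr
    fun w hw => Function.update_of_ne hw.2 _ _) z ⟨hz, hz0⟩

theorem DiffContOnCl.norm_canonicalFactor_smul_le {g : ℂ → E}
    (hg : DiffContOnCl ℂ g (ball 0 1)) {b : ℂ} (hb : b ∈ ball (0 : ℂ) 1) (hgb : g b = 0)
    {C : ℝ} (hC : ∀ z ∈ sphere (0 : ℂ) 1, ‖g z‖ ≤ C) {a : ℂ} (ha : a ∈ ball (0 : ℂ) 1) :
    ‖canonicalFactor 1 b a • g a‖ ≤ C := by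
  rcases eq_or_ne a b with rfl | hab
  · rw [canonicalFactor_apply_self, zero_smul, norm_zero]
    exact (norm_nonneg _).trans (hC 1 (by simp))
  -- `canonicalFactor 1 b • g`, with its removable singularity at `b` filled in
  set h : ℂ → E := fun z => (1 - conj b * z) • dslope g b z
  have h_eq : ∀ z ≠ b, h z = canonicalFactor 1 b z • g z := fun z hz => by
    simp only [h, dslope_of_ne g hz, slope_def_module, hgb, sub_zero, smul_smul,
      canonicalFactor_apply]
    congr 1
    push_cast
    ring
  have hdslope : DiffContOnCl ℂ (dslope g b) (ball 0 1) :=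
    .mk_ball ((differentiableOn_dslope (isOpen_ball.mem_nhds hb)).2 hg.1)
      ((continuousOn_dslope (closedBall_mem_nhds_of_mem hb)).2
        ⟨hg.continuousOn_ball, hg.differentiableAt isOpen_ball hb⟩)
  have hh : DiffContOnCl ℂ h (ball 0 1) :=
    (by fun_prop : Differentiable ℂ fun z => 1 - conj b * z).diffContOnCl.smul hdslope
  have hh_frontier : ∀ z ∈ frontier (ball (0 : ℂ) 1), ‖h z‖ ≤ C := fun z hz => by
    rw [frontier_ball 0 one_ne_zero] at hz
    have hzb : z ≠ b := by
      rintro rfl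
      exact (mem_ball_zero_iff.1 hb).ne (mem_sphere_zero_iff_norm.1 hz)
    rw [h_eq z hzb, norm_smul, norm_canonicalFactor_eval_circle_eq_one hb hz, one_mul]
    exact hC z hz
  exact h_eq a hab ▸ norm_le_of_forall_mem_frontier_norm_le isBounded_ball hh hh_frontier
    (subset_closure ha)

theorem canonicalFactor_one_ofReal_inv (p q : ℝ) (hp : p ≠ 0) (hq : q ≠ 0) :
    canonicalFactor 1 (q : ℂ)⁻¹ (p : ℂ)⁻¹ = (((p * q - 1) / (q - p) : ℝ) : ℂ) := by
  have hp : (p : ℂ) ≠ 0 := ofReal_ne_zero.2 hp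
  have hq : (q : ℂ) ≠ 0 := ofReal_ne_zero.2 hq
  rw [canonicalFactor_apply, ← mul_div_mul_left _ _ (mul_ne_zero hp hq), map_inv₀, conj_ofReal]
  push_cast
  congr 1 <;> field_simp

theorem single_pole_zero_robustness_bound_general (T : ℂ → ℂ) (p q : ℝ)
    (hd : DifferentiableOn ℂ T {ζ : ℂ | 1 < ‖ζ‖})
    (hc : ContinuousOn T {ζ : ℂ | 1 ≤ ‖ζ‖})
    (hb : ∃ M : ℝ, ∀ ζ : ℂ, 1 ≤ ‖ζ‖ → ‖T ζ‖ ≤ M)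
    (hp : 1 < |p|) (hq : 1 < |q|)
    (hTp : T (p : ℂ) = 1) (hTq : T (q : ℂ) = 0) :
    sSup ((fun ζ => ‖T ζ‖) '' {ζ : ℂ | ‖ζ‖ = 1}) ≥ |(p * q - 1) / (p - q)| := by
  obtain ⟨M, hM⟩ := hb
  obtain ⟨g, hg, hgT⟩ := exists_diffContOnCl_ball_eq_comp_inv hd hc
    ⟨M, by rintro _ ⟨ζ, hζ, rfl⟩; exact hM ζ hζ.le⟩
  have hg_sphere : ∀ z ∈ sphere (0 : ℂ) 1, ‖g z‖ ≤ sSup ((‖T ·‖) '' {ζ : ℂ | ‖ζ‖ = 1}) :=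
    fun z hz => by
      have hz : ‖z‖ = 1 := mem_sphere_zero_iff_norm.1 hz
      rw [hgT z (norm_ne_zero_iff.1 (hz ▸ one_ne_zero))]
      exact le_csSup ⟨M, by rintro _ ⟨ζ, hζ, rfl⟩; exact hM ζ hζ.ge⟩
        ⟨z⁻¹, by rw [mem_ofPred_eq, norm_inv, hz, inv_one], rfl⟩
  have inv_mem_ball : ∀ x : ℝ, 1 < |x| → (x : ℂ)⁻¹ ∈ ball (0 : ℂ) 1 := fun x hx => by
    rw [mem_ball_zero_iff, norm_inv, norm_real, Real.norm_eq_abs]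
    exact inv_lt_one_of_one_lt₀ hx
  have hp0 : p ≠ 0 := by rintro rfl; norm_num at hp
  have hq0 : q ≠ 0 := by rintro rfl; norm_num at hq
  have hbound := hg.norm_canonicalFactor_smul_le (inv_mem_ball q hq)
    (by rw [hgT _ (by simpa), inv_inv, hTq]) hg_sphere (inv_mem_ball p hp)
  rwa [hgT _ (by simpa), inv_inv, hTp, smul_eq_mul, mul_one,
    canonicalFactor_one_ofReal_inv p q hp0 hq0, norm_real, Real.norm_eq_abs, abs_div,
    abs_sub_comm q, ← abs_div] at hbound

/-- Single pole/zero robustness limit: if `T` is holomorphic on `{|ζ| > 1}`, continuous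
and bounded on `{|ζ| ≥ 1}`, with `T p = 1` and `T q = 0` for real `p, q` of modulus
greater than one, `p ≠ q`, then the sup of `|T|` on the unit circle is at least
`|(pq - 1)/(p - q)|`. -/
theorem single_pole_zero_robustness_bound (T : ℂ → ℂ) (p q : ℝ)
    (hd : DifferentiableOn ℂ T {ζ : ℂ | 1 < ‖ζ‖})
    (hc : ContinuousOn T {ζ : ℂ | 1 ≤ ‖ζ‖})
    (hb : ∃ M : ℝ, ∀ ζ : ℂ, 1 ≤ ‖ζ‖ → ‖T ζ‖ ≤ M)
    (hp : 1 < |p|) (hq : 1 < |q|) (hpq : p ≠ q)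
    (hTp : T (p : ℂ) = 1) (hTq : T (q : ℂ) = 0) :
    sSup ((fun ζ => ‖T ζ‖) '' {ζ : ℂ | ‖ζ‖ = 1}) ≥ |(p * q - 1) / (p - q)| :=
  single_pole_zero_robustness_bound_general T p q hd hc hb hp hq hTp hTq
end

section
/- For the Euler-discretized linearized cartpole with output z = h + ℓ₀θ and 0 < ℓ₀ < ℓ, the transfer function from u to z has zeros at 1 ± τ√(g/(ℓ − ℓ₀)); in particular one zero lies strictly outside the unit disc (the system is non-minimum phase). When ℓ₀ = ℓ, the transfer function has no finite zeros. -/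
/-!
The Euler discretization `(1 + τA, τB, C)` has Rosenbrock matrix `diag(τI, 1)` times the
continuous one at `s = (ζ - 1)/τ`, so its determinant is `τ⁴` times the continuous one,
which for the cartpole is `((ℓ - ℓ₀)s² - g)/(Mℓ)`. Hence the discrete zeros are `1 + τs` with
`(ℓ - ℓ₀)s² = g`: the two real roots `s = ±√(g/(ℓ - ℓ₀))` when `ℓ₀ < ℓ`, and none when
`ℓ₀ = ℓ`, where the determinant is the nonzero constant `-τ⁴g/(Mℓ)`.
-/

open Matrix

/-- Its determinant vanishes exactly at the invariant zeros of the system `(A, B, C)`. -/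
def rosenbrockMatrix {K n p q : Type*} [Ring K] [Fintype n] [DecidableEq n]
    (A : Matrix n n K) (B : Matrix n p K) (C : Matrix q n K) (ζ : K) :
    Matrix (n ⊕ q) (n ⊕ p) K :=
  fromBlocks (ζ • 1 - A) (-B) C 0

theorem rosenbrockMatrix_euler_eq_mul {K n p q : Type*} [Field K] [Fintype n] [DecidableEq n]
    [Fintype q] [DecidableEq q]
    (A : Matrix n n K) (B : Matrix n p K) (C : Matrix q n K) {τ : K} (hτ : τ ≠ 0) (ζ : K) :
    rosenbrockMatrix (1 + τ • A) (τ • B) C ζ =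
      fromBlocks (τ • (1 : Matrix n n K)) 0 0 (1 : Matrix q q K) *
        rosenbrockMatrix A B C ((ζ - 1) / τ) := by
  simp only [rosenbrockMatrix, fromBlocks_multiply]
  congr 1
  · rw [smul_mul_assoc, Matrix.one_mul, Matrix.zero_mul, add_zero, smul_sub, smul_smul,
      mul_div_cancel₀ _ hτ, sub_smul, one_smul]
    abel
  all_goals simp

theorem det_rosenbrockMatrix_euler {K n p : Type*} [Field K] [Fintype n] [DecidableEq n]
    [Fintype p] [DecidableEq p]
    (A : Matrix n n K) (B : Matrix n p K) (C : Matrix p n K) {τ : K} (hτ : τ ≠ 0) (ζ : K) :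
    (rosenbrockMatrix (1 + τ • A) (τ • B) C ζ).det =
      τ ^ Fintype.card n * (rosenbrockMatrix A B C ((ζ - 1) / τ)).det := by
  rw [rosenbrockMatrix_euler_eq_mul A B C hτ, det_mul, det_fromBlocks_zero₂₁, det_smul, det_one,
    det_one]
  ring

theorem mul_sq_sub_eq_zero_iff {a c x : ℝ} (ha : 0 < a) (hc : 0 ≤ c) :
    a * x ^ 2 - c = 0 ↔ x = √(c / a) ∨ x = -√(c / a) := by
  rw [sub_eq_zero, mul_comm, ← eq_div_iff ha.ne']
  conv_lhs => rw [← Real.sq_sqrt (div_nonneg hc ha.le)]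
  exact sq_eq_sq_iff_eq_or_eq_neg

noncomputable section

/-- State `(h, ḣ, θ, θ̇)`. -/
def cartpoleA (M m ℓ g : ℝ) : Matrix (Fin 4) (Fin 4) ℝ :=
  !![0, 1, 0, 0;
     0, 0, -(m * g / M), 0;
     0, 0, 0, 1;
     0, 0, (M + m) * g / (M * ℓ), 0]

def cartpoleB (M ℓ : ℝ) : Matrix (Fin 4) (Fin 1) ℝ := !![0; 1 / M; 0; -(1 / (M * ℓ))]

def cartpoleC (ℓ₀ : ℝ) : Matrix (Fin 1) (Fin 4) ℝ := !![1, 0, ℓ₀, 0]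

end

theorem reindex_rosenbrockMatrix_cartpole (M m ℓ g ℓ₀ s : ℝ) :
    reindex finSumFinEquiv finSumFinEquiv
        (rosenbrockMatrix (cartpoleA M m ℓ g) (cartpoleB M ℓ) (cartpoleC ℓ₀) s) =
      !![s, -1, 0, 0, 0;
         0, s, m * g / M, 0, -(1 / M);
         0, 0, s, -1, 0;
         0, 0, -((M + m) * g / (M * ℓ)), s, 1 / (M * ℓ);
         1, 0, ℓ₀, 0, 0] := by
  have hsymm : (finSumFinEquiv.symm : Fin (4 + 1) → Fin 4 ⊕ Fin 1) =
      ![.inl 0, .inl 1, .inl 2, .inl 3, .inr 0] := by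
    ext i; fin_cases i <;> rfl
  ext i j
  fin_cases i <;> fin_cases j <;>
    simp [hsymm, rosenbrockMatrix, cartpoleA, cartpoleB, cartpoleC, one_apply]

theorem det_rosenbrockMatrix_cartpole (M m ℓ g ℓ₀ s : ℝ) (hM : M ≠ 0) (hℓ : ℓ ≠ 0) :
    (rosenbrockMatrix (cartpoleA M m ℓ g) (cartpoleB M ℓ) (cartpoleC ℓ₀) s).det =
      ((ℓ - ℓ₀) * s ^ 2 - g) / (M * ℓ) := by
  rw [← det_reindex_self finSumFinEquiv, reindex_rosenbrockMatrix_cartpole]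
  simp only [det_succ_row_zero, Fin.sum_univ_succ, Fin.succAbove, det_unique, submatrix_apply,
    of_apply, cons_val', cons_val_zero, cons_val_one, cons_val, cons_val_fin_one, cons_val_succ,
    Finset.univ_unique, Finset.sum_singleton, Fin.isValue, Fin.reduceSucc, Fin.reduceCastSucc,
    Fin.reduceLT, Fin.castSucc_zero, Fin.succ_zero_eq_one, Fin.succ_one_eq_two, Fin.default_eq_zero,
    Fin.val_succ, Fin.val_zero, submatrix_submatrix, Function.comp_apply, ↓reduceIte]
  field_simp
  ring

theorem cartpole_discrete_zeros_general (M m ℓ g τ ℓ₀ : ℝ)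
    (hM : 0 < M) (hℓ : 0 < ℓ) (hg : 0 < g) (hτ : 0 < τ) :
    let Ac : Matrix (Fin 4) (Fin 4) ℝ :=
      !![0, 1, 0, 0;
         0, 0, -(m * g / M), 0;
         0, 0, 0, 1;
         0, 0, (M + m) * g / (M * ℓ), 0]
    let A : Matrix (Fin 4) (Fin 4) ℝ := 1 + τ • Ac
    let B : Matrix (Fin 4) (Fin 1) ℝ := !![0; τ * (1 / M); 0; τ * (-(1 / (M * ℓ)))]
    let Cm : Matrix (Fin 1) (Fin 4) ℝ := !![1, 0, ℓ₀, 0]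
    let R : ℝ → Matrix (Fin 4 ⊕ Fin 1) (Fin 4 ⊕ Fin 1) ℝ :=
      fun ζ => Matrix.fromBlocks (ζ • (1 : Matrix (Fin 4) (Fin 4) ℝ) - A) (-B) Cm 0
    (ℓ₀ < ℓ →
      (∀ ζ : ℝ, (R ζ).det = 0 ↔
        ζ = 1 + τ * Real.sqrt (g / (ℓ - ℓ₀)) ∨ ζ = 1 - τ * Real.sqrt (g / (ℓ - ℓ₀))) ∧
      1 < |1 + τ * Real.sqrt (g / (ℓ - ℓ₀))|) ∧
    (ℓ₀ = ℓ → ∀ ζ : ℝ, (R ζ).det ≠ 0) := by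
  intro Ac A B Cm R
  have hB : B = τ • cartpoleB M ℓ := by
    ext i j; fin_cases i <;> fin_cases j <;> simp [B, cartpoleB]
  have hdet (ζ : ℝ) : (R ζ).det = τ ^ 4 * (((ℓ - ℓ₀) * ((ζ - 1) / τ) ^ 2 - g) / (M * ℓ)) := by
    change (rosenbrockMatrix (1 + τ • cartpoleA M m ℓ g) B (cartpoleC ℓ₀) ζ).det = _
    rw [hB, det_rosenbrockMatrix_euler _ _ _ hτ.ne',
      det_rosenbrockMatrix_cartpole _ _ _ _ _ _ hM.ne' hℓ.ne', Fintype.card_fin]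
  have euler_zero (s ζ : ℝ) : (ζ - 1) / τ = s ↔ ζ = 1 + τ * s := by
    rw [div_eq_iff hτ.ne']
    constructor <;> intro h <;> linarith
  refine ⟨fun hlt => ⟨fun ζ => ?_, ?_⟩, fun heq ζ => ?_⟩
  · rw [hdet, mul_eq_zero, div_eq_zero_iff, mul_sq_sub_eq_zero_iff (sub_pos.2 hlt) hg.le,
      euler_zero, euler_zero, mul_neg, ← sub_eq_add_neg]
    simp [hτ.ne', hM.ne', hℓ.ne']
  · have hpos : 0 < τ * √(g / (ℓ - ℓ₀)) := by
      have := sub_pos.2 hlt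
      positivity
    rw [abs_of_pos (by linarith)]
    linarith
  · rw [hdet, heq, sub_self, zero_mul, zero_sub]
    exact mul_ne_zero (pow_ne_zero _ hτ.ne') (div_ne_zero (neg_ne_zero.2 hg.ne') (by positivity))

/-- Zeros of the Euler-discretized linearized cartpole with output `z = h + ℓ₀ θ`,
characterized via the Rosenbrock system matrix `[[ζI - A, -B], [C, 0]]`: for
`0 < ℓ₀ < ℓ` the (invariant) zeros are exactly `1 ± τ√(g/(ℓ - ℓ₀))`, and the zero
`1 + τ√(g/(ℓ - ℓ₀))` lies strictly outside the unit disc (non-minimum phase); for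
`ℓ₀ = ℓ` there are no finite zeros. -/
theorem cartpole_discrete_zeros (M m ℓ g τ ℓ₀ : ℝ)
    (hM : 0 < M) (hm : 0 < m) (hℓ : 0 < ℓ) (hg : 0 < g) (hτ : 0 < τ)
    (hℓ₀ : 0 < ℓ₀) (hℓ₀ℓ : ℓ₀ ≤ ℓ) :
    let Ac : Matrix (Fin 4) (Fin 4) ℝ :=
      !![0, 1, 0, 0;
         0, 0, -(m * g / M), 0;
         0, 0, 0, 1;
         0, 0, (M + m) * g / (M * ℓ), 0]
    let A : Matrix (Fin 4) (Fin 4) ℝ := 1 + τ • Ac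
    let B : Matrix (Fin 4) (Fin 1) ℝ := !![0; τ * (1 / M); 0; τ * (-(1 / (M * ℓ)))]
    let Cm : Matrix (Fin 1) (Fin 4) ℝ := !![1, 0, ℓ₀, 0]
    let R : ℝ → Matrix (Fin 4 ⊕ Fin 1) (Fin 4 ⊕ Fin 1) ℝ :=
      fun ζ => Matrix.fromBlocks (ζ • (1 : Matrix (Fin 4) (Fin 4) ℝ) - A) (-B) Cm 0
    (ℓ₀ < ℓ →
      (∀ ζ : ℝ, (R ζ).det = 0 ↔
        ζ = 1 + τ * Real.sqrt (g / (ℓ - ℓ₀)) ∨ ζ = 1 - τ * Real.sqrt (g / (ℓ - ℓ₀))) ∧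
      1 < |1 + τ * Real.sqrt (g / (ℓ - ℓ₀))|) ∧
    (ℓ₀ = ℓ → ∀ ζ : ℝ, (R ζ).det ≠ 0) :=
  cartpole_discrete_zeros_general M m ℓ g τ ℓ₀ hM hℓ hg hτ
end
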